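/- arXiv:2510.24128 — 3 statements merged into one kernel-verified Lean document; each statement's English description precedes it below -/
import Mathlib

section
/- Let ρ ∈ (0,1/2), γ > 0, b = 2ρ/(γ(1-ρ)). For every x with 0 < x < b, one has (γ/2)x + γ b^(2ρ) x^(1-2ρ) − γ b^ρ x^(1-ρ) + (1 − (γ/2)b) b^ρ x^(−ρ) > 1. -/
theorem stmt_2 (ρ γ b : ℝ) (hρ0 : 0 < ρ) (hρ1 : ρ < 1/2) (hγ : 0 < γ)
    (hb : b = 2 * ρ / (γ * (1 - ρ))) :
    ∀ x : ℝ, 0 < x → x < b →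
      1 < (γ / 2) * x + γ * b ^ (2 * ρ) * x ^ (1 - 2 * ρ)
          - γ * b ^ ρ * x ^ (1 - ρ) + (1 - (γ / 2) * b) * b ^ ρ * x ^ (-ρ) := by
  have h1ρ : 0 < 1 - ρ := by linarith
  have hb0 : 0 < b := by
    rw [hb]; positivity
  intro x hx hxb
  set p := Real.log x with hp
  set q := Real.log b with hq
  set L := q - p with hLdef
  have hL : 0 < L := by
    have := Real.log_lt_log hx hxb
    simp only [hLdef, hp, hq]; linarith
  set t := γ * b / 2 with htdef
  have ht' : t = ρ / (1 - ρ) := by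
    rw [htdef, hb]; field_simp
  have ht0 : 0 < t := by rw [ht']; positivity
  have ht1 : t < 1 := by
    rw [ht', div_lt_one h1ρ]; linarith
  set E := Real.exp (ρ * L) with hE
  set D := Real.exp ((2 * ρ - 1) * L) with hD
  have hxe : x = Real.exp p := (Real.exp_log hx).symm
  have hbe : b = Real.exp q := (Real.exp_log hb0).symm
  have h1 : b ^ (2 * ρ) * x ^ (1 - 2 * ρ) = Real.exp p * E ^ 2 := by
    rw [Real.rpow_def_of_pos hb0, Real.rpow_def_of_pos hx, hE, sq, ← Real.exp_add,
      ← Real.exp_add, ← Real.exp_add, ← hp, ← hq]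
    congr 1; rw [hLdef]; ring
  have h2 : b ^ ρ * x ^ (1 - ρ) = Real.exp p * E := by
    rw [Real.rpow_def_of_pos hb0, Real.rpow_def_of_pos hx, hE, ← Real.exp_add,
      ← Real.exp_add, ← hp, ← hq]
    congr 1; rw [hLdef]; ring
  have h3 : b ^ ρ * x ^ (-ρ) = E := by
    rw [Real.rpow_def_of_pos hb0, Real.rpow_def_of_pos hx, hE, ← Real.exp_add, ← hp, ← hq]
    congr 1; rw [hLdef]; ring
  have h5 : t * D = γ / 2 * (Real.exp p * E ^ 2) := by
    have haux : Real.exp q * Real.exp ((2 * ρ - 1) * L)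
        = Real.exp p * Real.exp (ρ * L) ^ 2 := by
      rw [sq, ← Real.exp_add, ← Real.exp_add, ← Real.exp_add]
      congr 1; rw [hLdef]; ring
    rw [htdef, hbe, hD, hE]
    linear_combination (γ / 2) * haux
  have key : (γ / 2) * x + γ * b ^ (2 * ρ) * x ^ (1 - 2 * ρ)
      - γ * b ^ ρ * x ^ (1 - ρ) + (1 - (γ / 2) * b) * b ^ ρ * x ^ (-ρ)
      = γ / 2 * Real.exp p * (1 - E) ^ 2 + (t * D + (1 - t) * E) := by
    rw [mul_assoc γ, h1, mul_assoc γ, h2, mul_assoc, h3, h5, hxe]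
    rw [htdef]; ring
  rw [key]
  have hnn : 0 ≤ γ / 2 * Real.exp p * (1 - E) ^ 2 := by positivity
  have hne : (2 * ρ - 1) * L ≠ ρ * L := by
    have : (2 * ρ - 1) * L < ρ * L := by nlinarith
    exact ne_of_lt this
  have hconv := strictConvexOn_exp.2 (Set.mem_univ ((2 * ρ - 1) * L)) (Set.mem_univ (ρ * L))
    hne ht0 (by linarith : (0:ℝ) < 1 - t) (by ring)
  simp only [smul_eq_mul] at hconv
  have harg : t * ((2 * ρ - 1) * L) + (1 - t) * (ρ * L) = 0 := by
    rw [ht']; field_simp; ring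
  rw [harg, Real.exp_zero, ← hD, ← hE] at hconv
  linarith
end

section
/- Let ρ ∈ (0,1/2), γ > 0, b = 2ρ/(γ(1-ρ)), μ, σ real with σ > 0 and ρ = 2μ/σ². Define V(x) = (1 − (γ/2)b) b^ρ x^(1−ρ) + (γ/2) b^(2ρ) x^(2−2ρ) for 0 < x < b, and g(x) = b^ρ x^(1−ρ) for 0 < x < b. Then for all x ∈ (0,b): (σ²x²/2)·V''(x) + μx·V'(x) = (γ/2)·σ²·x²·(g'(x))². -/
/-! On `(0, b)` we have `g = b^ρ x^(1-ρ)` and `V = (1 - γb/2) g + (γ/2) g²`. Since `μ = ρσ²/2`, the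
power `x^(1-ρ)` is the scale function of the diffusion, i.e. `ℒ g = 0`, so the carré du champ
identity `ℒ(φ²) = 2φ ℒφ + σ²x²φ'²` leaves `ℒ V = (γ/2) σ²x² g'²`. -/

open Filter Topology

noncomputable def gbmGenerator (μ σ : ℝ) (f : ℝ → ℝ) (x : ℝ) : ℝ :=
  σ ^ 2 * x ^ 2 / 2 * deriv (deriv f) x + μ * x * deriv f x

section GbmGenerator

variable {μ σ x : ℝ}

theorem gbmGenerator_congr {f g : ℝ → ℝ} (h : f =ᶠ[𝓝 x] g) :
    gbmGenerator μ σ f x = gbmGenerator μ σ g x := by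
  rw [gbmGenerator, gbmGenerator, h.deriv.deriv_eq, h.deriv_eq]

theorem gbmGenerator_eq_of_hasDerivAt {f f' : ℝ → ℝ} {f'' : ℝ}
    (hf : ∀ᶠ y in 𝓝 x, HasDerivAt f (f' y) y) (hf' : HasDerivAt f' f'' x) :
    gbmGenerator μ σ f x = σ ^ 2 * x ^ 2 / 2 * f'' + μ * x * f' x := by
  have hderiv : deriv f =ᶠ[𝓝 x] f' := hf.mono fun y hy => hy.deriv
  rw [gbmGenerator, hderiv.deriv_eq, hf'.deriv, hderiv.eq_of_nhds]

theorem gbmGenerator_linear_add_sq {φ φ' : ℝ → ℝ} {φ'' : ℝ} (a c : ℝ)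
    (hφ : ∀ᶠ y in 𝓝 x, HasDerivAt φ (φ' y) y) (hφ' : HasDerivAt φ' φ'' x) :
    gbmGenerator μ σ (fun y => a * φ y + c * φ y ^ 2) x
      = (a + 2 * c * φ x) * gbmGenerator μ σ φ x + c * σ ^ 2 * x ^ 2 * φ' x ^ 2 := by
  have hψ : ∀ᶠ y in 𝓝 x, HasDerivAt (fun y => a * φ y + c * φ y ^ 2)
      (a * φ' y + c * (2 * φ y * φ' y)) y :=
    hφ.mono fun y hy => by simpa using (hy.const_mul a).fun_add ((hy.fun_pow 2).const_mul c)
  have hψ' : HasDerivAt (fun y => a * φ' y + c * (2 * φ y * φ' y))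
      (a * φ'' + c * (2 * (φ' x * φ' x + φ x * φ''))) x := by
    simpa [mul_assoc] using (hφ'.const_mul a).fun_add
      (((hφ.self_of_nhds.fun_mul hφ').const_mul 2).const_mul c)
  rw [gbmGenerator_eq_of_hasDerivAt hψ hψ', gbmGenerator_eq_of_hasDerivAt hφ hφ']
  ring

theorem hasDerivAt_const_mul_rpow (k p : ℝ) {y : ℝ} (hy : 0 < y) :
    HasDerivAt (fun y => k * y ^ p) (k * p * y ^ (p - 1)) y := by
  simpa only [mul_assoc] using (Real.hasDerivAt_rpow_const (Or.inl hy.ne')).const_mul k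

theorem gbmGenerator_const_mul_rpow (k p : ℝ) (hx : 0 < x) :
    gbmGenerator μ σ (fun y => k * y ^ p) x = (σ ^ 2 / 2 * (p - 1) + μ) * p * k * x ^ p := by
  have hf := (eventually_gt_nhds hx).mono fun y hy => hasDerivAt_const_mul_rpow k p hy
  rw [gbmGenerator_eq_of_hasDerivAt hf (hasDerivAt_const_mul_rpow (k * p) (p - 1) hx)]
  have h1 : x ^ (p - 1) * x = x ^ p := by
    rw [← Real.rpow_add_one hx.ne', sub_add_cancel]
  have h2 : x ^ 2 * x ^ (p - 1 - 1) = x ^ p := by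
    rw [← Real.rpow_natCast, ← Real.rpow_add hx]; congr 1; push_cast; ring
  linear_combination σ ^ 2 / 2 * k * p * (p - 1) * h2 + μ * k * p * h1

end GbmGenerator

theorem stmt_3_general (ρ γ b μ σ : ℝ) (hσ : 0 < σ) (hμ : ρ = 2 * μ / σ ^ 2)
    (V g : ℝ → ℝ)
    (hV : ∀ x : ℝ, 0 < x → x < b →
      V x = (1 - (γ / 2) * b) * b ^ ρ * x ^ (1 - ρ) + (γ / 2) * b ^ (2 * ρ) * x ^ (2 - 2 * ρ))
    (hg : ∀ x : ℝ, 0 < x → x < b → g x = b ^ ρ * x ^ (1 - ρ)) :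
    ∀ x : ℝ, 0 < x → x < b →
      (σ ^ 2 * x ^ 2 / 2) * deriv (deriv V) x + μ * x * deriv V x
        = (γ / 2) * σ ^ 2 * x ^ 2 * (deriv g x) ^ 2 := by
  intro x hx hxb
  set φ : ℝ → ℝ := fun y => b ^ ρ * y ^ (1 - ρ)
  have hφ := (eventually_gt_nhds hx).mono fun y hy => hasDerivAt_const_mul_rpow (b ^ ρ) (1 - ρ) hy
  have hφ' := hasDerivAt_const_mul_rpow (b ^ ρ * (1 - ρ)) (1 - ρ - 1) hx
  have hnear : ∀ᶠ y in 𝓝 x, y ∈ Set.Ioo 0 b := Ioo_mem_nhds hx hxb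
  have hVφ : V =ᶠ[𝓝 x] fun y => (1 - γ / 2 * b) * φ y + γ / 2 * φ y ^ 2 :=
    hnear.mono fun y ⟨hy, hyb⟩ => by
      rw [hV y hy hyb]
      simp only [φ]
      rw [mul_pow, ← Real.rpow_mul_natCast (hx.trans hxb).le,
        ← Real.rpow_mul_natCast hy.le]
      ring_nf
  have hgφ : g =ᶠ[𝓝 x] φ := hnear.mono fun y hy => hg y hy.1 hy.2
  have hscale : gbmGenerator μ σ φ x = 0 := by
    have hμ' : μ = ρ * σ ^ 2 / 2 := by rw [hμ]; field_simp
    rw [gbmGenerator_const_mul_rpow _ _ hx, hμ']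
    ring
  change gbmGenerator μ σ V x = _
  rw [gbmGenerator_congr hVφ, gbmGenerator_linear_add_sq _ _ hφ hφ', hscale, hgφ.deriv_eq,
    hφ.self_of_nhds.deriv]
  ring

theorem stmt_3 (ρ γ b μ σ : ℝ) (hρ0 : 0 < ρ) (hρ1 : ρ < 1/2) (hγ : 0 < γ)
    (hb : b = 2 * ρ / (γ * (1 - ρ))) (hσ : 0 < σ) (hμ : ρ = 2 * μ / σ ^ 2)
    (V g : ℝ → ℝ)
    (hV : ∀ x : ℝ, 0 < x → x < b →
      V x = (1 - (γ / 2) * b) * b ^ ρ * x ^ (1 - ρ) + (γ / 2) * b ^ (2 * ρ) * x ^ (2 - 2 * ρ))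
    (hg : ∀ x : ℝ, 0 < x → x < b → g x = b ^ ρ * x ^ (1 - ρ)) :
    ∀ x : ℝ, 0 < x → x < b →
      (σ ^ 2 * x ^ 2 / 2) * deriv (deriv V) x + μ * x * deriv V x
        = (γ / 2) * σ ^ 2 * x ^ 2 * (deriv g x) ^ 2 :=
  stmt_3_general ρ γ b μ σ hσ hμ V g hV hg
end

section
/- Let ρ ∈ (0,1/2), γ > 0, b = 2ρ/(γ(1-ρ)). For 0 < x < b define V(x) = (1−(γ/2)b)b^ρx^(1−ρ) + (γ/2)b^(2ρ)x^(2−2ρ) and g(x) = b^ρx^(1−ρ). Then V(x) + (γ/2)(x − g(x))² = x·((γ/2)x + γb^(2ρ)x^(1−2ρ) − γb^ρx^(1−ρ) + (1−(γ/2)b)b^ρx^(−ρ)), and consequently V(x) + (γ/2)(x − g(x))² > x for all x ∈ (0,b). -/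
theorem stmt_9 (ρ γ b : ℝ) (hρ0 : 0 < ρ) (hρ1 : ρ < 1/2) (hγ : 0 < γ)
    (hb : b = 2 * ρ / (γ * (1 - ρ))) :
    ∀ x : ℝ, 0 < x → x < b →
      ((1 - (γ / 2) * b) * b ^ ρ * x ^ (1 - ρ) + (γ / 2) * b ^ (2 * ρ) * x ^ (2 - 2 * ρ))
          + (γ / 2) * (x - b ^ ρ * x ^ (1 - ρ)) ^ 2
        = x * ((γ / 2) * x + γ * b ^ (2 * ρ) * x ^ (1 - 2 * ρ)
            - γ * b ^ ρ * x ^ (1 - ρ) + (1 - (γ / 2) * b) * b ^ ρ * x ^ (-ρ)) ∧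
      x < ((1 - (γ / 2) * b) * b ^ ρ * x ^ (1 - ρ) + (γ / 2) * b ^ (2 * ρ) * x ^ (2 - 2 * ρ))
          + (γ / 2) * (x - b ^ ρ * x ^ (1 - ρ)) ^ 2 := by
  have hρ1' : ρ < 1 := by linarith
  have hρr : (0:ℝ) < 1 - ρ := by linarith
  intro x hx hxb
  have hbpos : 0 < b := lt_trans hx hxb
  have hb' : γ * (1 - ρ) * b = 2 * ρ := by
    rw [hb]; field_simp
  -- rpow rewrites
  have hb2 : b ^ (2*ρ) = b ^ ρ * b ^ ρ := by
    rw [← Real.rpow_add hbpos]; ring_nf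
  have hx1 : x ^ (1-ρ) = x * x ^ (-ρ) := by
    rw [show (1-ρ:ℝ) = 1 + (-ρ) by ring, Real.rpow_add hx, Real.rpow_one]
  have hx2 : x ^ (2-2*ρ) = x * x * (x ^ (-ρ) * x ^ (-ρ)) := by
    rw [show (2-2*ρ:ℝ) = (1 + (-ρ)) + (1 + (-ρ)) by ring, Real.rpow_add hx,
      Real.rpow_add hx, Real.rpow_one]; ring
  have hx3 : x ^ (1-2*ρ) = x * (x ^ (-ρ) * x ^ (-ρ)) := by
    rw [show (1-2*ρ:ℝ) = 1 + (-ρ) + (-ρ) by ring, Real.rpow_add hx,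
      Real.rpow_add hx, Real.rpow_one]; ring
  constructor
  · rw [hb2, hx1, hx2, hx3]; ring
  rw [hb2, hx1, hx2]
  have hxρ : (0:ℝ) < x ^ ρ := Real.rpow_pos_of_pos hx ρ
  have hbρ : (0:ℝ) < b ^ ρ := Real.rpow_pos_of_pos hbpos ρ
  have hybpos : 0 < x / b := div_pos hx hbpos
  have hu : b ^ ρ * x ^ (-ρ) = (x/b) ^ (-ρ) := by
    rw [Real.rpow_neg hx.le, Real.rpow_neg hybpos.le, Real.div_rpow hx.le hbpos.le]
    field_simp
  set u : ℝ := (x/b) ^ (-ρ) with hudef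
  have hu1 : 1 < u := by
    rw [hudef, Real.one_lt_rpow_iff_of_pos hybpos]
    right
    exact ⟨by rw [div_lt_one hbpos]; exact hxb, by linarith⟩
  have hupos : 0 < u := by linarith
  -- weighted AM-GM
  have hw : (1-2*ρ)/(1-ρ) + ρ/(1-ρ) = 1 := by
    field_simp; ring
  have hp2pos : (0:ℝ) < (x/b) ^ (1-2*ρ) := Real.rpow_pos_of_pos hybpos _
  have hamgm := Real.geom_mean_le_arith_mean2_weighted
    (div_nonneg (by linarith) hρr.le) (div_nonneg hρ0.le hρr.le)
    hupos.le hp2pos.le hw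
  have hgm : u ^ ((1-2*ρ)/(1-ρ)) * ((x/b) ^ (1-2*ρ)) ^ (ρ/(1-ρ)) = 1 := by
    rw [hudef, ← Real.rpow_mul hybpos.le, ← Real.rpow_mul hybpos.le,
      ← Real.rpow_add hybpos,
      show (-ρ)*((1-2*ρ)/(1-ρ)) + (1-2*ρ)*(ρ/(1-ρ)) = 0 from by ring, Real.rpow_zero]
  rw [hgm] at hamgm
  have hkey : (1-ρ) ≤ (1-2*ρ) * u + ρ * ((x/b) ^ (1-2*ρ)) := by
    have h := mul_le_mul_of_nonneg_left hamgm hρr.le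
    calc (1-ρ) = (1-ρ) * 1 := by ring
    _ ≤ (1-ρ) * ((1-2*ρ)/(1-ρ) * u + ρ/(1-ρ) * ((x/b) ^ (1-2*ρ))) := h
    _ = (1-2*ρ) * u + ρ * ((x/b) ^ (1-2*ρ)) := by field_simp
  have hp2 : (x/b) ^ (1-2*ρ) = (x/b) * (u * u) := by
    rw [hudef, show (1-2*ρ:ℝ) = 1 + (-ρ) + (-ρ) by ring, Real.rpow_add hybpos,
      Real.rpow_add hybpos, Real.rpow_one]
    ring
  rw [hp2] at hkey
  have hbx : b * (x/b) = x := by field_simp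
  have hkey'' : b*(1-ρ) ≤ b*(1-2*ρ)*u + ρ*(x*(u*u)) := by
    calc b*(1-ρ) ≤ b * ((1-2*ρ) * u + ρ * ((x/b) * (u*u))) :=
          mul_le_mul_of_nonneg_left hkey hbpos.le
    _ = b*(1-2*ρ)*u + ρ*((b*(x/b))*(u*u)) := by ring
    _ = b*(1-2*ρ)*u + ρ*(x*(u*u)) := by rw [hbx]
  have h2 : x < (1 - γ/2*b)*(x*u) + γ/2*(x*u)^2 + γ/2*(x - x*u)^2 := by
    have hid : b*(1-ρ)*(((1 - γ/2*b)*(x*u) + γ/2*(x*u)^2 + γ/2*(x - x*u)^2) - x)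
        = x*((b*(1-2*ρ)*u + ρ*(x*(u*u))) - b*(1-ρ)) + ρ*x^2*(u-1)^2 := by
      linear_combination ((-(b*x*u) + (x*u)^2 + (x-x*u)^2)/2) * hb'
    have hpos1 : 0 ≤ x*((b*(1-2*ρ)*u + ρ*(x*(u*u))) - b*(1-ρ)) :=
      mul_nonneg hx.le (by linarith)
    have hpos2 : 0 < ρ*x^2*(u-1)^2 :=
      mul_pos (mul_pos hρ0 (pow_pos hx 2)) (pow_pos (by linarith) 2)
    have hc : 0 < b*(1-ρ) := mul_pos hbpos hρr
    have h3 : 0 < b*(1-ρ)*(((1 - γ/2*b)*(x*u) + γ/2*(x*u)^2 + γ/2*(x - x*u)^2) - x) := by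
      rw [hid]; linarith
    have h4 := lt_of_mul_lt_mul_left
      (by linarith : b*(1-ρ)*0 < b*(1-ρ)*(((1 - γ/2*b)*(x*u) + γ/2*(x*u)^2 + γ/2*(x - x*u)^2) - x))
      hc.le
    linarith
  calc x < (1 - γ/2*b)*(x*u) + γ/2*(x*u)^2 + γ/2*(x - x*u)^2 := h2
  _ = (1 - γ / 2 * b) * b ^ ρ * (x * x ^ (-ρ)) + γ / 2 * (b ^ ρ * b ^ ρ) * (x * x * (x ^ (-ρ) * x ^ (-ρ)))
          + γ / 2 * (x - b ^ ρ * (x * x ^ (-ρ))) ^ 2 := by rw [← hu]; ring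
end
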